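/- Let 0 < k₁ < k_N and d > 0. The function z ↦ tanh(z)/z is strictly decreasing on (0,∞); consequently, if ν₁·k_N/k₁ ≤ ν_N·k₁/k_N with ν₁, ν_N > 0, then ν_N^W·ν₁ − ν_N·ν₁^W ≤ ν_N·k₁²·d·[tanh(k_Nd)/(k_Nd) − tanh(k₁d)/(k₁d)] < 0, where ν_j^W = k_j·tanh(k_jd). -/

import Mathlib

/-!
`tanh z / z` is the slope of the chord of `tanh` from the origin; its derivative is
`(z - sinh z cosh z) / (z cosh z)²`, negative on `(0, ∞)` since `2z < sinh 2z`.
Given this monotonicity, the hypothesis says `ν₁ kN ≤ νN k₁² / kN`, which bounds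
`kN tanh (kN d) ν₁` by `νN k₁² d · tanh (kN d) / (kN d)`.
-/

open Real Set

namespace Real

theorem hasDerivAt_tanh (x : ℝ) : HasDerivAt tanh (1 / cosh x ^ 2) x := by
  have h := (hasDerivAt_sinh x).div (hasDerivAt_cosh x) (cosh_pos x).ne'
  rwa [← sq, ← sq, cosh_sq_sub_sinh_sq, show sinh / cosh = tanh from
    funext fun y => (tanh_eq_sinh_div_cosh y).symm] at h

theorem tanh_pos {x : ℝ} (hx : 0 < x) : 0 < tanh x := by
  rw [tanh_eq_sinh_div_cosh]
  exact div_pos (sinh_pos_iff.2 hx) (cosh_pos x)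

theorem self_lt_sinh_mul_cosh {x : ℝ} (hx : 0 < x) : x < sinh x * cosh x := by
  have h := self_lt_sinh_iff.2 (mul_pos two_pos hx)
  rw [sinh_two_mul] at h
  linarith

theorem div_cosh_sq_mul_lt_tanh {x : ℝ} (hx : 0 < x) : 1 / cosh x ^ 2 * x < tanh x := by
  have hc := cosh_pos x
  rw [tanh_eq_sinh_div_cosh, div_mul_eq_mul_div, div_lt_div_iff₀ (by positivity) hc]
  nlinarith [self_lt_sinh_mul_cosh hx]

theorem strictAntiOn_tanh_div_self : StrictAntiOn (fun z : ℝ => tanh z / z) (Ioi 0) := by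
  have hderiv : ∀ x : ℝ, 0 < x → HasDerivAt (fun z => tanh z / z)
      ((1 / cosh x ^ 2 * x - tanh x * 1) / x ^ 2) x :=
    fun x hx => (hasDerivAt_tanh x).div (hasDerivAt_id x) hx.ne'
  refine strictAntiOn_of_deriv_neg (convex_Ioi 0) (fun x hx => ?_) (fun x hx => ?_)
  · exact (hderiv x hx).continuousAt.continuousWithinAt
  · rw [interior_Ioi] at hx
    rw [(hderiv x hx).deriv]
    have := div_cosh_sq_mul_lt_tanh hx
    exact div_neg_of_neg_of_pos (by linarith) (pow_pos hx 2)

end Real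

theorem tanh_div_antitone_and_ineq_general (k₁ kN d ν₁ νN : ℝ) (hk₁ : 0 < k₁)
    (hkN : k₁ < kN) (hd : 0 < d) (hνN : 0 < νN) :
    StrictAntiOn (fun z : ℝ => tanh z / z) (Set.Ioi 0) ∧
      (ν₁ * kN / k₁ ≤ νN * k₁ / kN →
        (kN * tanh (kN*d)) * ν₁ - νN * (k₁ * tanh (k₁*d))
            ≤ νN * k₁^2 * d * (tanh (kN*d)/(kN*d) - tanh (k₁*d)/(k₁*d)) ∧
          νN * k₁^2 * d * (tanh (kN*d)/(kN*d) - tanh (k₁*d)/(k₁*d)) < 0) := by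
  have hkN₀ : 0 < kN := hk₁.trans hkN
  refine ⟨strictAntiOn_tanh_div_self, fun h => ⟨?_, ?_⟩⟩
  · have hcoef : ν₁ * kN ≤ νN * k₁ ^ 2 / kN := by
      have := mul_le_mul_of_nonneg_right h hk₁.le
      rwa [div_mul_cancel₀ _ hk₁.ne', div_mul_eq_mul_div, mul_assoc, ← sq] at this
    have htanh := (tanh_pos (mul_pos hkN₀ hd)).le
    calc kN * tanh (kN*d) * ν₁ - νN * (k₁ * tanh (k₁*d))
        = ν₁ * kN * tanh (kN*d) - νN * (k₁ * tanh (k₁*d)) := by ring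
      _ ≤ νN * k₁ ^ 2 / kN * tanh (kN*d) - νN * (k₁ * tanh (k₁*d)) := by gcongr
      _ = νN * k₁^2 * d * (tanh (kN*d)/(kN*d) - tanh (k₁*d)/(k₁*d)) := by
        field_simp
  · have hslope : tanh (kN*d)/(kN*d) < tanh (k₁*d)/(k₁*d) :=
      strictAntiOn_tanh_div_self (mem_Ioi.2 (by positivity)) (mem_Ioi.2 (by positivity))
        (mul_lt_mul_of_pos_right hkN hd)
    exact mul_neg_of_pos_of_neg (by positivity) (sub_neg.2 hslope)

theorem tanh_div_antitone_and_ineq (k₁ kN d ν₁ νN : ℝ) (hk₁ : 0 < k₁)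
    (hkN : k₁ < kN) (hd : 0 < d) (hν₁ : 0 < ν₁) (hνN : 0 < νN) :
    StrictAntiOn (fun z : ℝ => tanh z / z) (Set.Ioi 0) ∧
      (ν₁ * kN / k₁ ≤ νN * k₁ / kN →
        (kN * tanh (kN*d)) * ν₁ - νN * (k₁ * tanh (k₁*d))
            ≤ νN * k₁^2 * d * (tanh (kN*d)/(kN*d) - tanh (k₁*d)/(k₁*d)) ∧
          νN * k₁^2 * d * (tanh (kN*d)/(kN*d) - tanh (k₁*d)/(k₁*d)) < 0) :=
  tanh_div_antitone_and_ineq_general k₁ kN d ν₁ νN hk₁ hkN hd hνN
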